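/- Let μ be the bilinear multiplication of 𝒵₄₀ on ℂ⁵ (e₁e₁ = e₂, e₁e₂ = (1/2)e₃, e₁e₃ = 2e₄, e₁e₄ = e₅, e₂e₁ = e₃, e₂e₂ = 3e₄, e₂e₃ = 8e₅, e₃e₁ = 6e₄, e₃e₂ = 12e₅, e₄e₁ = 4e₅, other basis products zero) and λ the bilinear multiplication on ℂ⁵ of the split algebra [𝔷₁]¹₁ ⊕ ℂ (e₁e₁ = e₂, e₁e₂ = (1/2)e₃, e₁e₃ = 2e₄, e₂e₁ = e₃, e₂e₂ = 3e₄, e₃e₁ = 6e₄, other basis products zero). Then μ degenerates to λ: there exists a family (g_t), t ∈ ℂ \ {0}, of invertible linear endomorphisms of ℂ⁵ such that for all x, y ∈ ℂ⁵ the map t ↦ g_t⁻¹(μ(g_t x, g_t y)) tends to λ(x,y) as t → 0 within ℂ \ {0}. -/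
import Mathlib


open Topology Filter

/-- The standard basis of `ℂ⁵`. -/
def ee (i : Fin 5) : Fin 5 → ℂ := Pi.single i 1

/-- Structure constants (0-indexed) of the algebra `𝒵₄₀`:
`e₁e₁ = e₂`, `e₁e₂ = (1/2)e₃`, `e₁e₃ = 2e₄`, `e₁e₄ = e₅`, `e₂e₁ = e₃`,
`e₂e₂ = 3e₄`, `e₂e₃ = 8e₅`, `e₃e₁ = 6e₄`, `e₃e₂ = 12e₅`, `e₄e₁ = 4e₅`. -/
noncomputable def cZ40 (i j : Fin 5) : Fin 5 → ℂ :=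
  if i = 0 ∧ j = 0 then ee 1
  else if i = 0 ∧ j = 1 then (1/2 : ℂ) • ee 2
  else if i = 0 ∧ j = 2 then (2 : ℂ) • ee 3
  else if i = 0 ∧ j = 3 then ee 4
  else if i = 1 ∧ j = 0 then ee 2
  else if i = 1 ∧ j = 1 then (3 : ℂ) • ee 3
  else if i = 1 ∧ j = 2 then (8 : ℂ) • ee 4
  else if i = 2 ∧ j = 0 then (6 : ℂ) • ee 3
  else if i = 2 ∧ j = 1 then (12 : ℂ) • ee 4
  else if i = 3 ∧ j = 0 then (4 : ℂ) • ee 4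
  else 0

/-- Structure constants (0-indexed) of the split algebra `[𝔷₁]¹₁ ⊕ ℂ`:
`e₁e₁ = e₂`, `e₁e₂ = (1/2)e₃`, `e₁e₃ = 2e₄`, `e₂e₁ = e₃`, `e₂e₂ = 3e₄`,
`e₃e₁ = 6e₄`. -/
noncomputable def cZsplit (i j : Fin 5) : Fin 5 → ℂ :=
  if i = 0 ∧ j = 0 then ee 1
  else if i = 0 ∧ j = 1 then (1/2 : ℂ) • ee 2
  else if i = 0 ∧ j = 2 then (2 : ℂ) • ee 3
  else if i = 1 ∧ j = 0 then ee 2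
  else if i = 1 ∧ j = 1 then (3 : ℂ) • ee 3
  else if i = 2 ∧ j = 0 then (6 : ℂ) • ee 3
  else 0

/-- weights for the diagonal degeneration -/
def ww : Fin 5 → ℕ := ![1, 2, 3, 4, 0]

/-- diagonal linear map -/
def diagMap (d : Fin 5 → ℂ) : (Fin 5 → ℂ) →ₗ[ℂ] (Fin 5 → ℂ) where
  toFun x := fun i => d i * x i
  map_add' x y := by funext i; simp [mul_add]
  map_smul' c x := by funext i; simp [smul_eq_mul]; ring

/-- diagonal linear equivalence -/
noncomputable def diagEquiv (d : Fin 5 → ℂ) (h : ∀ i, d i ≠ 0) :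
    (Fin 5 → ℂ) ≃ₗ[ℂ] (Fin 5 → ℂ) :=
  LinearEquiv.ofLinear (diagMap d) (diagMap fun i => (d i)⁻¹)
    (by ext x i; simp only [diagMap, LinearMap.coe_comp, LinearMap.coe_mk,
      AddHom.coe_mk, Function.comp_apply, LinearMap.id_coe, id_eq,
      ← mul_assoc, mul_inv_cancel₀ (h i), one_mul])
    (by ext x i; simp only [diagMap, LinearMap.coe_comp, LinearMap.coe_mk,
      AddHom.coe_mk, Function.comp_apply, LinearMap.id_coe, id_eq,
      ← mul_assoc, inv_mul_cancel₀ (h i), one_mul])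

lemma expand_basis (x : Fin 5 → ℂ) : x = ∑ i, x i • ee i := by
  funext j
  simp [ee, Finset.sum_apply, Pi.single_apply]

lemma bilin_expand (B : (Fin 5 → ℂ) →ₗ[ℂ] (Fin 5 → ℂ) →ₗ[ℂ] (Fin 5 → ℂ))
    (x y : Fin 5 → ℂ) :
    B x y = ∑ i, ∑ j, (x i * y j) • B (ee i) (ee j) := by
  conv_lhs => rw [expand_basis x, expand_basis y]
  simp only [map_sum, LinearMap.sum_apply, map_smul, LinearMap.smul_apply,
    smul_smul]
  rw [Finset.sum_comm]
  refine Finset.sum_congr rfl fun j _ => ?_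
  rw [Finset.smul_sum]
  refine Finset.sum_congr rfl fun i _ => ?_
  rw [smul_smul, mul_comm]

/-- `𝒵₄₀` degenerates to the split algebra `[𝔷₁]¹₁ ⊕ ℂ`. -/
theorem Z40_degenerates_to_split
    (μ lam : (Fin 5 → ℂ) →ₗ[ℂ] (Fin 5 → ℂ) →ₗ[ℂ] (Fin 5 → ℂ))
    (hμ : ∀ i j, μ (ee i) (ee j) = cZ40 i j)
    (hlam : ∀ i j, lam (ee i) (ee j) = cZsplit i j) :
    ∃ g : ℂ → ((Fin 5 → ℂ) ≃ₗ[ℂ] (Fin 5 → ℂ)),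
      ∀ x y : Fin 5 → ℂ,
        Tendsto (fun t : ℂ => (g t).symm (μ (g t x) (g t y)))
          (𝓝[≠] (0 : ℂ)) (𝓝 (lam x y)) := by
  refine ⟨fun t => if h : t = 0 then LinearEquiv.refl ℂ _
    else diagEquiv (fun i => t ^ ww i) (fun i => pow_ne_zero _ h), fun x y => ?_⟩
  set E : Fin 5 → ℂ :=
    (x 0 * y 3 + 8 * x 1 * y 2 + 12 * x 2 * y 1 + 4 * x 3 * y 0) • ee 4 with hE
  have key : ∀ t : ℂ, t ≠ 0 →
      ((if h : t = 0 then LinearEquiv.refl ℂ (Fin 5 → ℂ)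
          else diagEquiv (fun i => t ^ ww i) (fun i => pow_ne_zero _ h)).symm
        (μ ((if h : t = 0 then LinearEquiv.refl ℂ (Fin 5 → ℂ)
          else diagEquiv (fun i => t ^ ww i) (fun i => pow_ne_zero _ h)) x)
           ((if h : t = 0 then LinearEquiv.refl ℂ (Fin 5 → ℂ)
          else diagEquiv (fun i => t ^ ww i) (fun i => pow_ne_zero _ h)) y)))
      = lam x y + t ^ 5 • E := by
    intro t ht
    simp only [dif_neg ht]
    rw [bilin_expand μ, bilin_expand lam]
    simp only [hμ, hlam]
    funext k
    fin_cases k <;>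
      simp [diagEquiv, diagMap, Fin.sum_univ_five, cZ40, cZsplit, ee, ww,
        Pi.single_apply, Finset.sum_apply, hE] <;>
      (try field_simp) <;> (try ring)
  have hcont : Tendsto (fun t : ℂ => lam x y + t ^ 5 • E)
      (𝓝[≠] (0 : ℂ)) (𝓝 (lam x y)) := by
    have hc : Continuous fun t : ℂ => lam x y + t ^ 5 • E := by continuity
    have h0 : Tendsto (fun t : ℂ => lam x y + t ^ 5 • E) (𝓝 0)
        (𝓝 (lam x y)) := by simpa using hc.tendsto 0
    exact h0.mono_left nhdsWithin_le_nhds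
  refine hcont.congr' ?_
  filter_upwards [self_mem_nhdsWithin] with t ht
  exact (key t ht).symm
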